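/- Let 0 < F₂ < F₁, F₂ < F₃ and 1 < A < B, with F(x) = F₁ for 0 ≤ x < A, F(x) = F₂ for A ≤ x < B, F(x) = F₃ for x ≥ B, and v(x) = 0 for all x ∈ [0,1]. If there are no collisions on [0,∞), then F₃ > F₁. -/

import Mathlib

/-!
After the last jump a particle moves as `F₃ t² / 2 + drift · t + const`, where
`drift = v_B - F₃ T_B` (speed and time at `B`). So two particles eventually collide as soon as
the one behind has the larger drift. With `v_A² = 2F₁(A - x)`, `v_B² = v_A² + 2F₂(B - A)`,
`T_A = v_A / F₁` and `T_B = T_A + (v_B - v_A) / F₂`, one finds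
`F₁ F₂ · drift = F₁ (F₂ - F₃) v_B + F₃ (F₁ - F₂) v_A`. Since `v_B - v_A` decreases as `v_A`
grows and `F₂ < F₃`, if `F₃ ≤ F₁` the drift of `x = 0` exceeds that of `x = 1`, and the
intermediate value theorem produces a collision.
-/

open Set Filter

theorem sqrt_sq_add_sub_sqrt_sq_add_lt {a b c : ℝ} (ha : 0 ≤ a) (hab : a < b) (hc : 0 < c) :
    √(b ^ 2 + c) - √(a ^ 2 + c) < b - a := by
  have hb : b < √(b ^ 2 + c) := Real.lt_sqrt_of_sq_lt (by linarith)
  have ha' : a < √(a ^ 2 + c) := Real.lt_sqrt_of_sq_lt (by linarith)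
  have hsq : (√(b ^ 2 + c) - √(a ^ 2 + c)) * (√(b ^ 2 + c) + √(a ^ 2 + c)) =
      (b - a) * (b + a) := by
    linear_combination Real.sq_sqrt (by positivity : 0 ≤ b ^ 2 + c) -
      Real.sq_sqrt (by positivity : 0 ≤ a ^ 2 + c)
  nlinarith

noncomputable def twoStepTraj (F₁ F₂ F₃ A B x t : ℝ) : ℝ :=
  let TA := Real.sqrt (2 * (A - x) / F₁)
  let vA := F₁ * TA
  let s := (-vA + Real.sqrt (vA ^ 2 + 2 * F₂ * (B - A))) / F₂
  let TB := TA + s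
  let vB := vA + F₂ * s
  if t ≤ TA then x + F₁ * t ^ 2 / 2
  else if t ≤ TB then A + vA * (t - TA) + F₂ * (t - TA) ^ 2 / 2
  else B + vB * (t - TB) + F₃ * (t - TB) ^ 2 / 2

namespace TwoStep

/- The phase quantities are written exactly as the `let`s of `twoStepTraj`, so that
`twoStepTraj_eq` holds by `rfl`. -/

noncomputable def timeA (F₁ A x : ℝ) : ℝ := √(2 * (A - x) / F₁)

noncomputable def speedA (F₁ A x : ℝ) : ℝ := F₁ * timeA F₁ A x

noncomputable def speedB (F₁ F₂ A B x : ℝ) : ℝ := √(speedA F₁ A x ^ 2 + 2 * F₂ * (B - A))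

noncomputable def gapTime (F₁ F₂ A B x : ℝ) : ℝ := (-speedA F₁ A x + speedB F₁ F₂ A B x) / F₂

noncomputable def timeB (F₁ F₂ A B x : ℝ) : ℝ := timeA F₁ A x + gapTime F₁ F₂ A B x

noncomputable def drift (F₁ F₂ F₃ A B x : ℝ) : ℝ :=
  speedB F₁ F₂ A B x - F₃ * timeB F₁ F₂ A B x

theorem twoStepTraj_eq (F₁ F₂ F₃ A B x t : ℝ) :
    twoStepTraj F₁ F₂ F₃ A B x t =
      if t ≤ timeA F₁ A x then x + F₁ * t ^ 2 / 2
      else if t ≤ timeB F₁ F₂ A B x then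
        A + speedA F₁ A x * (t - timeA F₁ A x) + F₂ * (t - timeA F₁ A x) ^ 2 / 2
      else B + (speedA F₁ A x + F₂ * gapTime F₁ F₂ A B x) * (t - timeB F₁ F₂ A B x)
        + F₃ * (t - timeB F₁ F₂ A B x) ^ 2 / 2 :=
  rfl

theorem twoStepTraj_zero (F₁ F₂ F₃ A B x : ℝ) : twoStepTraj F₁ F₂ F₃ A B x 0 = x := by
  rw [twoStepTraj_eq, if_pos (show 0 ≤ timeA F₁ A x from Real.sqrt_nonneg _)]
  ring

section Kinematics

variable {F₁ F₂ F₃ A B x y : ℝ}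

theorem sq_timeA (hF₁ : 0 < F₁) (hx : x ≤ A) : timeA F₁ A x ^ 2 = 2 * (A - x) / F₁ :=
  Real.sq_sqrt (div_nonneg (by linarith) hF₁.le)

theorem add_mul_sq_timeA (hF₁ : 0 < F₁) (hx : x ≤ A) : x + F₁ * timeA F₁ A x ^ 2 / 2 = A := by
  rw [sq_timeA hF₁ hx]
  field_simp
  ring

theorem sq_speedA (hF₁ : 0 < F₁) (hx : x ≤ A) : speedA F₁ A x ^ 2 = 2 * F₁ * (A - x) := by
  rw [speedA, mul_pow, sq_timeA hF₁ hx]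
  field_simp

theorem speedA_nonneg (hF₁ : 0 ≤ F₁) : 0 ≤ speedA F₁ A x :=
  mul_nonneg hF₁ (Real.sqrt_nonneg _)

theorem speedA_lt_speedA (hF₁ : 0 < F₁) (hxy : x < y) (hy : y ≤ A) :
    speedA F₁ A y < speedA F₁ A x := by
  have hy2 := sq_speedA hF₁ hy
  have hx2 := sq_speedA (F₁ := F₁) hF₁ (hxy.le.trans hy)
  nlinarith [speedA_nonneg (A := A) (x := x) hF₁.le, speedA_nonneg (A := A) (x := y) hF₁.le]

theorem sq_speedB (hF₂ : 0 ≤ F₂) (hAB : A ≤ B) :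
    speedB F₁ F₂ A B x ^ 2 = speedA F₁ A x ^ 2 + 2 * F₂ * (B - A) :=
  Real.sq_sqrt (by nlinarith [sq_nonneg (speedA F₁ A x)])

theorem speedA_le_speedB (hF₂ : 0 ≤ F₂) (hAB : A ≤ B) : speedA F₁ A x ≤ speedB F₁ F₂ A B x :=
  Real.le_sqrt_of_sq_le (by nlinarith)

theorem speedA_add_mul_gapTime (hF₂ : F₂ ≠ 0) :
    speedA F₁ A x + F₂ * gapTime F₁ F₂ A B x = speedB F₁ F₂ A B x := by
  rw [gapTime]
  field_simp
  ring

theorem gapTime_nonneg (hF₂ : 0 ≤ F₂) (hAB : A ≤ B) : 0 ≤ gapTime F₁ F₂ A B x :=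
  div_nonneg (by linarith [speedA_le_speedB (F₁ := F₁) (x := x) hF₂ hAB]) hF₂

theorem timeA_le_timeB (hF₂ : 0 ≤ F₂) (hAB : A ≤ B) : timeA F₁ A x ≤ timeB F₁ F₂ A B x :=
  le_add_of_nonneg_right (gapTime_nonneg hF₂ hAB)

theorem add_speedA_mul_gapTime (hF₂ : 0 < F₂) (hAB : A ≤ B) :
    A + speedA F₁ A x * gapTime F₁ F₂ A B x + F₂ * gapTime F₁ F₂ A B x ^ 2 / 2 = B := by
  have hv := speedA_add_mul_gapTime (F₁ := F₁) (A := A) (B := B) (x := x) hF₂.ne'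
  have hsq := sq_speedB (F₁ := F₁) (x := x) hF₂.le hAB
  have : F₂ * (speedA F₁ A x * gapTime F₁ F₂ A B x + F₂ * gapTime F₁ F₂ A B x ^ 2 / 2) =
      F₂ * (B - A) := by
    rw [← hv] at hsq
    linear_combination hsq / 2
  linarith [mul_left_cancel₀ hF₂.ne' this]

theorem continuous_twoStepTraj (hF₁ : 0 < F₁) (hF₂ : 0 < F₂) (hx : x ≤ A) (hAB : A ≤ B) :
    Continuous (twoStepTraj F₁ F₂ F₃ A B x) := by
  simp_rw [funext (twoStepTraj_eq F₁ F₂ F₃ A B x)]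
  refine Continuous.if_le (by fun_prop) ?_ continuous_id continuous_const ?_
  · refine Continuous.if_le (by fun_prop) (by fun_prop) continuous_id continuous_const ?_
    rintro t rfl
    rw [timeB]
    linear_combination add_speedA_mul_gapTime (F₁ := F₁) (x := x) hF₂ hAB
  · rintro t rfl
    rw [if_pos (timeA_le_timeB hF₂.le hAB), add_mul_sq_timeA hF₁ hx]
    ring

theorem twoStepTraj_of_timeB_lt {t : ℝ} (hF₂ : 0 < F₂) (hAB : A ≤ B)
    (ht : timeB F₁ F₂ A B x < t) :
    twoStepTraj F₁ F₂ F₃ A B x t =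
      F₃ * t ^ 2 / 2 + drift F₁ F₂ F₃ A B x * t +
        (B - speedB F₁ F₂ A B x * timeB F₁ F₂ A B x + F₃ * timeB F₁ F₂ A B x ^ 2 / 2) := by
  rw [twoStepTraj_eq, if_neg ((timeA_le_timeB hF₂.le hAB).trans_lt ht).not_ge, if_neg ht.not_ge,
    speedA_add_mul_gapTime hF₂.ne', drift]
  ring

theorem mul_drift (hF₁ : F₁ ≠ 0) (hF₂ : F₂ ≠ 0) :
    F₁ * F₂ * drift F₁ F₂ F₃ A B x =
      F₁ * (F₂ - F₃) * speedB F₁ F₂ A B x + F₃ * (F₁ - F₂) * speedA F₁ A x := by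
  rw [drift, timeB, gapTime, speedA]
  field_simp
  ring

theorem drift_lt_drift (hF₂ : 0 < F₂) (hF₂₃ : F₂ < F₃) (hF₃₁ : F₃ ≤ F₁) (hAB : A < B)
    (hxy : x < y) (hy : y ≤ A) :
    drift F₁ F₂ F₃ A B y < drift F₁ F₂ F₃ A B x := by
  have hF₁ : 0 < F₁ := by linarith
  have hA := speedA_lt_speedA hF₁ hxy hy
  have hB : speedB F₁ F₂ A B x - speedB F₁ F₂ A B y < speedA F₁ A x - speedA F₁ A y :=
    sqrt_sq_add_sub_sqrt_sq_add_lt (speedA_nonneg hF₁.le) hA (by nlinarith)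
  have hmul : F₁ * F₂ * drift F₁ F₂ F₃ A B y < F₁ * F₂ * drift F₁ F₂ F₃ A B x := by
    linarith [mul_drift (F₃ := F₃) (A := A) (B := B) (x := x) hF₁.ne' hF₂.ne',
      mul_drift (F₃ := F₃) (A := A) (B := B) (x := y) hF₁.ne' hF₂.ne',
      mul_lt_mul_of_pos_left hB (by nlinarith : 0 < F₁ * (F₃ - F₂)),
      mul_nonneg (by nlinarith : 0 ≤ F₂ * (F₁ - F₃)) (sub_nonneg.2 hA.le)]
  exact lt_of_mul_lt_mul_left hmul (by positivity)

theorem exists_twoStepTraj_lt_of_drift_lt (hF₂ : 0 < F₂) (hAB : A ≤ B)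
    (h : drift F₁ F₂ F₃ A B y < drift F₁ F₂ F₃ A B x) :
    ∃ T, 0 ≤ T ∧ twoStepTraj F₁ F₂ F₃ A B y T < twoStepTraj F₁ F₂ F₃ A B x T := by
  set c : ℝ → ℝ := fun z =>
    B - speedB F₁ F₂ A B z * timeB F₁ F₂ A B z + F₃ * timeB F₁ F₂ A B z ^ 2 / 2
  have hgap : Tendsto (fun t => (drift F₁ F₂ F₃ A B x - drift F₁ F₂ F₃ A B y) * t + (c x - c y))
      atTop atTop :=
    tendsto_atTop_add_const_right _ _ (tendsto_id.const_mul_atTop (sub_pos.2 h))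
  obtain ⟨T, hT₀, ⟨hTx, hTy⟩, hpos⟩ := ((eventually_ge_atTop 0).and
    (((eventually_gt_atTop (timeB F₁ F₂ A B x)).and (eventually_gt_atTop (timeB F₁ F₂ A B y))).and
      (hgap.eventually_gt_atTop 0))).exists
  refine ⟨T, hT₀, ?_⟩
  rw [twoStepTraj_of_timeB_lt hF₂ hAB hTx, twoStepTraj_of_timeB_lt hF₂ hAB hTy]
  dsimp only [c] at hpos
  linarith

end Kinematics

end TwoStep

open TwoStep in
theorem two_step_force_no_collisions_necessary_general
    (F₁ F₂ F₃ A B : ℝ)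
    (hF₂ : 0 < F₂) (hF₂₃ : F₂ < F₃)
    (hA : 1 < A) (hAB : A < B)
    (hnc : ∀ t, 0 ≤ t → ∀ x₁ ∈ Icc (0:ℝ) 1, ∀ x₂ ∈ Icc (0:ℝ) 1, x₁ ≠ x₂ →
        twoStepTraj F₁ F₂ F₃ A B x₁ t ≠ twoStepTraj F₁ F₂ F₃ A B x₂ t) :
    F₁ < F₃ := by
  by_contra! hF₃₁
  have hF₁ : 0 < F₁ := by linarith
  obtain ⟨T, hT, hovertake⟩ := exists_twoStepTraj_lt_of_drift_lt (F₃ := F₃) hF₂ hAB.le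
    (drift_lt_drift hF₂ hF₂₃ hF₃₁ hAB zero_lt_one hA.le)
  have hcont := (continuous_twoStepTraj (F₃ := F₃) hF₁ hF₂ hA.le hAB.le).sub
    (continuous_twoStepTraj (F₃ := F₃) hF₁ hF₂ (zero_le_one.trans hA.le) hAB.le)
  obtain ⟨t, ht, hcollide⟩ := intermediate_value_Icc' hT hcont.continuousOn
    ⟨(sub_neg.2 hovertake).le, by simp [twoStepTraj_zero]⟩
  exact hnc t ht.1 1 (by simp) 0 (by simp) one_ne_zero (sub_eq_zero.1 hcollide)

/-- Two gaps, particles starting at rest: for `0 < F₂ < F₁`, `F₂ < F₃`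
and `1 < A < B`, if there are no collisions on `[0,∞)`, then `F₃ > F₁`. -/
theorem two_step_force_no_collisions_necessary
    (F₁ F₂ F₃ A B : ℝ)
    (hF₂ : 0 < F₂) (hF₁₂ : F₂ < F₁) (hF₂₃ : F₂ < F₃)
    (hA : 1 < A) (hAB : A < B)
    (hnc : ∀ t, 0 ≤ t → ∀ x₁ ∈ Icc (0:ℝ) 1, ∀ x₂ ∈ Icc (0:ℝ) 1, x₁ ≠ x₂ →
        twoStepTraj F₁ F₂ F₃ A B x₁ t ≠ twoStepTraj F₁ F₂ F₃ A B x₂ t) :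
    F₁ < F₃ :=
  two_step_force_no_collisions_necessary_general F₁ F₂ F₃ A B hF₂ hF₂₃ hA hAB hnc
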